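/- For every integer r ≥ 0, the subcomplex I_r ⊆ D*^{⊗(r+1)} (the span of the tensors all of whose factors are Heaviside or Dirac functions) has zero cohomology in every degree. -/

import Mathlib

/-! On the first tensor factor, `h : ω_s ↦ -Y_s, Y_s ↦ 0` is a contracting homotopy of
`span {Y_s, ω_s}`, because `d Y_s = -ω_s`. Tensored with the identity on the remaining `r`
factors, the Koszul signs make `h` anticommute with the differentials of those factors, so
`d h + h d = id` on `I_r`. Hence every cocycle `z` of `I_r` is `d (h z)` with `h z ∈ I_r` of one
degree less, and in degree `0` we get `z = 0` since `h` kills degree-`0` tensors. -/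

/-- Basis labels for the differential graded algebra `D*` over `k`:
`one` is the constant function `1` (degree 0), `Y s` is the Heaviside function
with singular support `{s}` (degree 0), and `om s` is the Dirac function with
singular support `{s}` (degree 1). -/
inductive DB : Type
  | one : DB
  | Y : ℤ → DB
  | om : ℤ → DB
  deriving DecidableEq

/-- cohomological degree of a basis element -/
def DB.deg : DB → ℕ
  | .one => 0
  | .Y _ => 0
  | .om _ => 1

/-- singular support of a basis element -/
def DB.supp : DB → Finset ℤ
  | .one => ∅
  | .Y s => {s}
  | .om s => {s}

variable (k : Type) [CommRing k]

/-- The `n`-fold tensor power `D*^{⊗n}` of the complex `D*` over `k`, modelled as the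
free `k`-module on the basis of decomposable tensors `f₁ ⊗ ⋯ ⊗ f_n` of basis elements. -/
abbrev Tot (n : ℕ) : Type := (Fin n → DB) →₀ k

/-- total (cohomological) degree of a basis tensor -/
def degT {n : ℕ} (g : Fin n → DB) : ℕ := ∑ i, (g i).deg

/-- the homogeneous degree-`i` component of `D*^{⊗n}` -/
def homog (n i : ℕ) : Submodule k (Tot k n) where
  carrier := {x | ∀ g, x g ≠ 0 → degT g = i}
  add_mem' := by
    intro x y hx hy g hg
    by_cases h : x g = 0
    · refine hy g ?_
      intro h'; apply hg; simp [Finsupp.add_apply, h, h']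
    · exact hx g h
  zero_mem' := by intro g hg; simp at hg
  smul_mem' := by
    intro c x hx g hg
    refine hx g fun h => hg ?_
    simp [Finsupp.smul_apply, h]

lemma mem_homog {n i : ℕ} {x : Tot k n} :
    x ∈ homog k n i ↔ ∀ g, x g ≠ 0 → degT g = i := Iff.rfl

/-- `I` : the span of the basis tensors `f₀ ⊗ ⋯ ⊗ f_r` in which every factor is a
Heaviside or a Dirac function (no factor equals `1`). -/
def noOne (n : ℕ) : Submodule k (Tot k n) where
  carrier := {x | ∀ g, x g ≠ 0 → ∀ i, g i ≠ DB.one}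
  add_mem' := by
    intro x y hx hy g hg
    by_cases h : x g = 0
    · refine hy g ?_
      intro h'; apply hg; simp [Finsupp.add_apply, h, h']
    · exact hx g h
  zero_mem' := by intro g hg; simp at hg
  smul_mem' := by
    intro c x hx g hg
    refine hx g fun h => hg ?_
    simp [Finsupp.smul_apply, h]

lemma mem_noOne {n : ℕ} {x : Tot k n} :
    x ∈ noOne k n ↔ ∀ g, x g ≠ 0 → ∀ i, g i ≠ DB.one := Iff.rfl

/-- The Koszul-sign differential on a basis tensor:
`d(f₁ ⊗ ⋯ ⊗ f_n) = Σ_i (-1)^{deg f₁ + ⋯ + deg f_{i-1}} f₁ ⊗ ⋯ ⊗ d f_i ⊗ ⋯ ⊗ f_n`,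
where `d(Y s) = - ω_s`, `d 1 = 0`, `d (ω s) = 0`. -/
noncomputable def dB {n : ℕ} (g : Fin n → DB) : Tot k n :=
  ∑ i : Fin n,
    match g i with
    | DB.Y s =>
        Finsupp.single (Function.update g i (DB.om s))
          (-(-1 : k) ^ (∑ j ∈ Finset.univ.filter (fun j : Fin n => j < i), (g j).deg))
    | _ => (0 : Tot k n)

/-- the total differential of the complex `D*^{⊗n}` (it raises degree by one) -/
noncomputable def dT (n : ℕ) : Tot k n →ₗ[k] Tot k n :=
  Finsupp.linearCombination k (dB k (n := n))

open Function Finset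

def koszulExp {n : ℕ} (g : Fin n → DB) (i : Fin n) : ℕ :=
  ∑ j ∈ univ.filter (· < i), (g j).deg

noncomputable def dBterm {n : ℕ} (g : Fin n → DB) (i : Fin n) : Tot k n :=
  match g i with
  | DB.Y s => Finsupp.single (update g i (DB.om s)) (-(-1 : k) ^ koszulExp g i)
  | _ => 0

noncomputable def hB {n : ℕ} (g : Fin (n + 1) → DB) : Tot k (n + 1) :=
  match g 0 with
  | DB.om s => Finsupp.single (update g 0 (DB.Y s)) (-1)
  | _ => 0

noncomputable def hT (n : ℕ) : Tot k (n + 1) →ₗ[k] Tot k (n + 1) :=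
  Finsupp.linearCombination k (hB k (n := n))

variable {k}

section Degrees

lemma sum_deg_update_add {n : ℕ} (g : Fin n → DB) (j : Fin n) (b : DB) {s : Finset (Fin n)}
    (hj : j ∈ s) :
    ∑ x ∈ s, (update g j b x).deg + (g j).deg = ∑ x ∈ s, (g x).deg + b.deg := by
  simp_rw [apply_update (fun _ => DB.deg)]
  rw [sum_update_of_mem hj, sum_eq_add_sum_sdiff_singleton_of_mem hj (fun x => (g x).deg)]
  ring

lemma degT_update_add {n : ℕ} (g : Fin n → DB) (j : Fin n) (b : DB) :
    degT (update g j b) + (g j).deg = degT g + b.deg :=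
  sum_deg_update_add g j b (mem_univ j)

lemma koszulExp_zero {n : ℕ} (g : Fin (n + 1) → DB) : koszulExp g 0 = 0 := by
  simp [koszulExp]

lemma koszulExp_update_zero_Y {n : ℕ} {g : Fin (n + 1) → DB} {s : ℤ} (h0 : g 0 = DB.om s)
    {i : Fin (n + 1)} (hi : i ≠ 0) :
    koszulExp g i = koszulExp (update g 0 (DB.Y s)) i + 1 := by
  have := sum_deg_update_add g 0 (DB.Y s) (s := univ.filter (· < i))
    (by simpa using Fin.pos_of_ne_zero hi)
  rw [h0] at this
  exact (this.trans (add_zero _)).symm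

lemma deg_zero_of_degT_eq_zero {n : ℕ} {g : Fin n → DB} (hg : degT g = 0) (i : Fin n) :
    (g i).deg = 0 :=
  (sum_eq_zero_iff.1 hg) i (mem_univ i)

end Degrees

section Basis

lemma single_mem_noOne {n : ℕ} {g : Fin n → DB} (hg : ∀ i, g i ≠ DB.one) (c : k) :
    Finsupp.single g c ∈ noOne k n := by
  intro g' hne
  rw [(Finsupp.single_apply_ne_zero.1 hne).1]
  exact hg

lemma single_mem_homog {n i : ℕ} {g : Fin n → DB} (hg : degT g = i) (c : k) :
    Finsupp.single g c ∈ homog k n i := by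
  intro g' hne
  rwa [(Finsupp.single_apply_ne_zero.1 hne).1]

lemma dB_eq_sum_dBterm {n : ℕ} (g : Fin n → DB) : dB k g = ∑ i, dBterm k g i := rfl

lemma dBterm_of_Y {n : ℕ} {g : Fin n → DB} {i : Fin n} {s : ℤ} (h : g i = DB.Y s) :
    dBterm k g i = Finsupp.single (update g i (DB.om s)) (-(-1 : k) ^ koszulExp g i) := by
  unfold dBterm; rw [h]

lemma dBterm_eq_zero {n : ℕ} {g : Fin n → DB} {i : Fin n} (h : ∀ s, g i ≠ DB.Y s) :
    dBterm k g i = 0 := by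
  unfold dBterm; split <;> simp_all

lemma hB_of_om {n : ℕ} {g : Fin (n + 1) → DB} {s : ℤ} (h : g 0 = DB.om s) :
    hB k g = Finsupp.single (update g 0 (DB.Y s)) (-1) := by
  unfold hB; rw [h]

lemma hB_eq_zero {n : ℕ} {g : Fin (n + 1) → DB} (h : ∀ s, g 0 ≠ DB.om s) : hB k g = 0 := by
  unfold hB; split <;> simp_all

lemma dT_single {n : ℕ} (g : Fin n → DB) (c : k) :
    dT k n (Finsupp.single g c) = c • dB k g :=
  Finsupp.linearCombination_single k c g

lemma hT_single {n : ℕ} (g : Fin (n + 1) → DB) (c : k) :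
    hT k n (Finsupp.single g c) = c • hB k g :=
  Finsupp.linearCombination_single k c g

end Basis

section Homotopy

lemma hT_dBterm_of_Y {n : ℕ} {g : Fin (n + 1) → DB} {s : ℤ} (h0 : g 0 = DB.Y s)
    (i : Fin (n + 1)) :
    hT k n (dBterm k g i) = if i = 0 then Finsupp.single g 1 else 0 := by
  split_ifs with hi
  · subst hi
    rw [dBterm_of_Y h0, hT_single, koszulExp_zero, hB_of_om (update_self ..), update_idem, ← h0,
      update_eq_self]
    simp
  · cases hgi : g i with
    | Y t =>
      have hδ0 : update g i (DB.om t) 0 = DB.Y s := by rwa [update_of_ne (Ne.symm hi)]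
      rw [dBterm_of_Y hgi, hT_single, hB_eq_zero (by simp [hδ0]), smul_zero]
    | _ => rw [dBterm_eq_zero (by simp [hgi]), map_zero]

lemma hT_dBterm_sub_dBterm_of_om {n : ℕ} {g : Fin (n + 1) → DB} {s : ℤ} (h0 : g 0 = DB.om s)
    (i : Fin (n + 1)) :
    hT k n (dBterm k g i) - dBterm k (update g 0 (DB.Y s)) i =
      if i = 0 then Finsupp.single g 1 else 0 := by
  split_ifs with hi
  · subst hi
    rw [dBterm_eq_zero (by simp [h0]), dBterm_of_Y (update_self ..), koszulExp_zero, update_idem,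
      ← h0, update_eq_self]
    simp
  · have hgi' : update g 0 (DB.Y s) i = g i := update_of_ne hi _ _
    cases hgi : g i with
    | Y t =>
      have hδ0 : update g i (DB.om t) 0 = DB.om s := by rwa [update_of_ne (Ne.symm hi)]
      rw [dBterm_of_Y hgi, dBterm_of_Y (hgi'.trans hgi), hT_single, hB_of_om hδ0, update_comm hi,
        koszulExp_update_zero_Y h0 hi]
      simp [pow_succ]
    | _ => rw [dBterm_eq_zero (by simp [hgi]), dBterm_eq_zero (by simp [hgi', hgi]), map_zero,
        sub_zero]

lemma dT_hB_add_hT_dB {n : ℕ} {g : Fin (n + 1) → DB} (hg : g 0 ≠ DB.one) :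
    dT k (n + 1) (hB k g) + hT k n (dB k g) = Finsupp.single g 1 := by
  rw [dB_eq_sum_dBterm, map_sum]
  cases h0 : g 0 with
  | one => exact absurd h0 hg
  | Y s =>
    rw [hB_eq_zero (g := g) (by simp [h0]), map_zero, zero_add]
    simp [hT_dBterm_of_Y h0]
  | om s =>
    rw [hB_of_om h0, dT_single, dB_eq_sum_dBterm, smul_sum, ← sum_add_distrib]
    simp_rw [neg_one_smul, neg_add_eq_sub, hT_dBterm_sub_dBterm_of_om h0]
    simp

lemma dT_hT_add_hT_dT {n : ℕ} {z : Tot k (n + 1)} (hz : z ∈ noOne k (n + 1)) :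
    dT k (n + 1) (hT k n z) + hT k n (dT k (n + 1) z) = z := by
  have hbasis : ∀ g ∈ z.support, dT k (n + 1) (hT k n (Finsupp.single g (z g))) +
      hT k n (dT k (n + 1) (Finsupp.single g (z g))) = Finsupp.single g (z g) := by
    intro g hg
    rw [hT_single, dT_single, map_smul, map_smul, ← smul_add,
      dT_hB_add_hT_dB (hz g (Finsupp.mem_support_iff.1 hg) 0), Finsupp.smul_single_one]
  conv_lhs => rw [← z.sum_single]
  simp only [Finsupp.sum, map_sum, ← sum_add_distrib]
  rw [sum_congr rfl hbasis]
  exact z.sum_single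

end Homotopy

section Membership

lemma hT_mem_of_hB_mem {n : ℕ} {P : Submodule k (Tot k (n + 1))} {z : Tot k (n + 1)}
    (h : ∀ g ∈ z.support, hB k g ∈ P) : hT k n z ∈ P := by
  rw [hT, Finsupp.linearCombination_apply]
  exact P.sum_mem fun g hg => P.smul_mem _ (h g hg)

lemma hB_mem_noOne {n : ℕ} {g : Fin (n + 1) → DB} (hg : ∀ i, g i ≠ DB.one) :
    hB k g ∈ noOne k (n + 1) := by
  cases h0 : g 0 with
  | om s =>
    rw [hB_of_om h0]
    refine single_mem_noOne (fun i => ?_) _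
    rcases eq_or_ne i 0 with rfl | hi
    · simp
    · rw [update_of_ne hi]; exact hg i
  | _ => rw [hB_eq_zero (by simp [h0])]; exact zero_mem _

lemma hB_mem_homog {n i : ℕ} {g : Fin (n + 1) → DB} (hg : degT g = i + 1) :
    hB k g ∈ homog k (n + 1) i := by
  cases h0 : g 0 with
  | om s =>
    rw [hB_of_om h0]
    refine single_mem_homog ?_ _
    have := degT_update_add g 0 (DB.Y s)
    rw [h0] at this
    change _ + 1 = _ + 0 at this
    omega
  | _ => rw [hB_eq_zero (by simp [h0])]; exact zero_mem _

lemma hB_eq_zero_of_degT_eq_zero {n : ℕ} {g : Fin (n + 1) → DB} (hg : degT g = 0) :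
    hB k g = 0 :=
  hB_eq_zero fun s h0 => by simpa [h0, DB.deg] using deg_zero_of_degT_eq_zero hg 0

lemma hT_mem_noOne {n : ℕ} {z : Tot k (n + 1)} (hz : z ∈ noOne k (n + 1)) :
    hT k n z ∈ noOne k (n + 1) :=
  hT_mem_of_hB_mem fun g hg => hB_mem_noOne (hz g (Finsupp.mem_support_iff.1 hg))

lemma hT_mem_homog {n i : ℕ} {z : Tot k (n + 1)} (hz : z ∈ homog k (n + 1) (i + 1)) :
    hT k n z ∈ homog k (n + 1) i :=
  hT_mem_of_hB_mem fun g hg => hB_mem_homog (hz g (Finsupp.mem_support_iff.1 hg))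

lemma hT_eq_zero_of_mem_homog_zero {n : ℕ} {z : Tot k (n + 1)} (hz : z ∈ homog k (n + 1) 0) :
    hT k n z = 0 :=
  (Submodule.mem_bot k).1 <| hT_mem_of_hB_mem fun g hg =>
    (Submodule.mem_bot k).2 (hB_eq_zero_of_degT_eq_zero (hz g (Finsupp.mem_support_iff.1 hg)))

end Membership

theorem statement1 (k : Type) [CommRing k] (r : ℕ) :
    (∀ z ∈ noOne k (r + 1), z ∈ homog k (r + 1) 0 → dT k (r + 1) z = 0 → z = 0) ∧
    (∀ i : ℕ, ∀ z ∈ noOne k (r + 1), z ∈ homog k (r + 1) (i + 1) → dT k (r + 1) z = 0 →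
      ∃ w ∈ noOne k (r + 1), w ∈ homog k (r + 1) i ∧ dT k (r + 1) w = z) := by
  refine ⟨fun z hz hz0 hdz => ?_, fun i z hz hzi hdz =>
    ⟨hT k r z, hT_mem_noOne hz, hT_mem_homog hzi, ?_⟩⟩
  · simpa [hdz, hT_eq_zero_of_mem_homog_zero hz0] using (dT_hT_add_hT_dT hz).symm
  · simpa [hdz] using dT_hT_add_hT_dT hz
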